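/- arXiv:2012.10636 — 3 statements merged into one kernel-verified Lean document; each statement's English description precedes it below -/
import Mathlib

section
/- The restricted greedy J-center clustering algorithm (which greedily picks centers from a subset W of the vertex set, each new center being a point of W farthest from the current centers) produces a center set Q_J of size J whose fill distance satisfies h(Q_J) ≤ 2·h(Q_J^opt) + h(W), where Q_J^opt is any set of J centers minimizing the fill distance and h(W) is the fill distance of W. In particular, if h(W) ≤ ε·h(Q_J^opt), the greedy method yields a (2+ε)-approximation. -/
/-- Fill distance of a finite center set `Q` in a finite metric space:
`h(Q) = max_v min_{q ∈ Q} d(q, v)`. -/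
noncomputable def fillDist {V : Type*} [Fintype V] [MetricSpace V] (Q : Finset V) : ℝ :=
  ⨆ v : V, ⨅ q : Q, dist (q : V) v

lemma bddBelow_dist_range {ι : Sort*} (f : ι → ℝ) (h : ∀ i, 0 ≤ f i) :
    BddBelow (Set.range f) := ⟨0, by rintro x ⟨i, rfl⟩; exact h i⟩

lemma fillDist_near {V : Type*} [Fintype V] [MetricSpace V] (Q : Finset V)
    (hQ : Q.Nonempty) (v : V) : ∃ c ∈ Q, dist c v ≤ fillDist Q := by
  haveI := hQ.to_subtype
  obtain ⟨c, hc, hmin⟩ := Q.exists_min_image (fun x => dist x v) hQ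
  refine ⟨c, hc, ?_⟩
  have h1 : dist c v ≤ ⨅ q : Q, dist (q : V) v := le_ciInf fun x => hmin x x.2
  have h2 : (⨅ q : Q, dist (q : V) v) ≤ ⨆ v : V, ⨅ q : Q, dist (q : V) v :=
    le_ciSup (f := fun v : V => ⨅ q : Q, dist (q : V) v)
      (Set.Finite.bddAbove (Set.finite_range _)) v
  exact h1.trans h2

/-- Restricted greedy `J`-center clustering: the greedy centers `q 0, …, q (J-1)` are chosen
from `W`, each `q j` maximizing (over `w ∈ W`) the minimal distance to the previous centers.
Then `h(Q_J) ≤ 2 h(Q_J^opt) + h(W)` for an optimal center set `Qopt` of size `J`, and if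
`h(W) ≤ ε h(Qopt)` the greedy set is a `(2+ε)`-approximation. -/
theorem restricted_greedy_Jcenter_bound
    {V : Type*} [Fintype V] [DecidableEq V] [MetricSpace V] [Nonempty V]
    (W : Finset V) (hW : W.Nonempty) (J : ℕ) (hJ : 0 < J)
    (q : Fin J → V) (hqW : ∀ j, q j ∈ W)
    (hgreedy : ∀ j : Fin J, ∀ w ∈ W,
      (⨅ k : {k : Fin J // k < j}, dist (q k.1) w) ≤
        ⨅ k : {k : Fin J // k < j}, dist (q k.1) (q j))
    (Qopt : Finset V) (hcard : Qopt.card = J)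
    (hopt : ∀ Q' : Finset V, Q'.card = J → fillDist Qopt ≤ fillDist Q') :
    fillDist (Finset.univ.image q) ≤ 2 * fillDist Qopt + fillDist W ∧
      ∀ ε : ℝ, 0 ≤ ε → fillDist W ≤ ε * fillDist Qopt →
        fillDist (Finset.univ.image q) ≤ (2 + ε) * fillDist Qopt := by
  classical
  haveI hJne : Nonempty (Fin J) := ⟨⟨0, hJ⟩⟩
  obtain ⟨w₀, hw₀W, hw₀max⟩ := W.exists_max_image (fun w => ⨅ k : Fin J, dist (q k) w) hW
  -- the J+1 well-separated points
  set p : Fin (J + 1) → V := fun i => if h : (i : ℕ) < J then q ⟨i.1, h⟩ else w₀ with hp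
  have hsep : ∀ i l : Fin (J + 1), i < l → (⨅ k : Fin J, dist (q k) w₀) ≤ dist (p i) (p l) := by
    intro i l hil
    have hil' : (i : ℕ) < (l : ℕ) := hil
    have hiJ : (i : ℕ) < J := by have := l.isLt; omega
    have hpi : p i = q ⟨i.1, hiJ⟩ := by simp [hp, hiJ]
    by_cases hlJ : (l : ℕ) < J
    · have hpl : p l = q ⟨l.1, hlJ⟩ := by simp [hp, hlJ]
      set l' : Fin J := ⟨l.1, hlJ⟩ with hl'
      have hmemlt : (⟨i.1, hiJ⟩ : Fin J) < l' := by
        simp only [hl', Fin.lt_def]; exact hil'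
      haveI : Nonempty {k : Fin J // k < l'} := ⟨⟨⟨i.1, hiJ⟩, hmemlt⟩⟩
      have h1 : (⨅ k : Fin J, dist (q k) w₀) ≤ ⨅ k : {k : Fin J // k < l'}, dist (q k.1) w₀ :=
        le_ciInf fun k => ciInf_le (bddBelow_dist_range _ fun _ => dist_nonneg) k.1
      have h2 := hgreedy l' w₀ hw₀W
      have h3 : (⨅ k : {k : Fin J // k < l'}, dist (q k.1) (q l')) ≤
          dist (q ⟨i.1, hiJ⟩) (q l') :=
        ciInf_le (bddBelow_dist_range _ fun _ => dist_nonneg) (⟨⟨i.1, hiJ⟩, hmemlt⟩ : {k : Fin J // k < l'})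
      rw [hpi, hpl]
      exact le_trans (le_trans h1 h2) h3
    · have hpl : p l = w₀ := by simp [hp, hlJ]
      rw [hpi, hpl]
      exact ciInf_le (bddBelow_dist_range _ fun _ => dist_nonneg) (⟨i.1, hiJ⟩ : Fin J)
  -- pigeonhole against the optimal centers
  have hQoptne : Qopt.Nonempty := Finset.card_pos.mp (hcard ▸ hJ)
  choose f hfmem hfd using fun i : Fin (J + 1) => fillDist_near Qopt hQoptne (p i)
  have hcard' : Fintype.card {x // x ∈ Qopt} < Fintype.card (Fin (J + 1)) := by
    simp [Fintype.card_coe, hcard]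
  obtain ⟨i, l, hne, heq⟩ := Fintype.exists_ne_map_eq_of_card_lt
    (fun i : Fin (J + 1) => (⟨f i, hfmem i⟩ : {x // x ∈ Qopt})) hcard'
  have heq' : f i = f l := congrArg Subtype.val heq
  have key : ∀ a b : Fin (J + 1), a < b → f a = f b → (⨅ k : Fin J, dist (q k) w₀) ≤ 2 * fillDist Qopt := by
    intro a b hab hfab
    calc (⨅ k : Fin J, dist (q k) w₀) ≤ dist (p a) (p b) := hsep a b hab
      _ ≤ dist (p a) (f a) + dist (f a) (p b) := dist_triangle _ _ _
      _ = dist (f a) (p a) + dist (f b) (p b) := by rw [dist_comm, hfab]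
      _ ≤ fillDist Qopt + fillDist Qopt := add_le_add (hfd a) (hfd b)
      _ = 2 * fillDist Qopt := by ring
  have hs2 : (⨅ k : Fin J, dist (q k) w₀) ≤ 2 * fillDist Qopt := by
    rcases (Ne.lt_or_gt hne) with h | h
    · exact key i l h heq'
    · exact key l i h heq'.symm
  -- main bound
  have main : fillDist (Finset.univ.image q) ≤ (⨅ k : Fin J, dist (q k) w₀) + fillDist W := by
    unfold fillDist
    refine ciSup_le fun v => ?_
    obtain ⟨w, hwW, hwd⟩ := fillDist_near W hW v
    obtain ⟨k, -, hkmin⟩ := Finset.exists_min_image Finset.univ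
      (fun k : Fin J => dist (q k) w) ⟨⟨0, hJ⟩, Finset.mem_univ _⟩
    have hks : dist (q k) w ≤ ⨅ k : Fin J, dist (q k) w₀ := by
      have h1 : dist (q k) w ≤ ⨅ k : Fin J, dist (q k) w :=
        le_ciInf fun j => hkmin j (Finset.mem_univ _)
      exact h1.trans (hw₀max w hwW)
    have hmem : q k ∈ Finset.univ.image q := Finset.mem_image_of_mem q (Finset.mem_univ k)
    calc (⨅ c : (Finset.univ.image q : Finset V), dist (c : V) v)
        ≤ dist (q k) v :=
          ciInf_le (bddBelow_dist_range _ fun _ => dist_nonneg) (⟨q k, hmem⟩ : {x // x ∈ Finset.univ.image q})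
      _ ≤ dist (q k) w + dist w v := dist_triangle _ _ _
      _ ≤ (⨅ k : Fin J, dist (q k) w₀) + fillDist W := add_le_add hks hwd
  have h1 : fillDist (Finset.univ.image q) ≤ 2 * fillDist Qopt + fillDist W := by
    linarith
  refine ⟨h1, fun ε hε hεW => ?_⟩
  nlinarith [h1, hεW]
end

section
/- Leibniz-type ℒᵖ estimate for the graph gradient: for 1 ≤ p ≤ ∞ and signals x, y on a graph, ‖∇_L(x·y)‖_{ℒᵖ(E)} ≤ ‖∇_L x‖_{ℒᵖ(E)} · ‖y‖_{ℒ^∞(G)} + ‖x‖_{ℒᵖ(G)} · ‖∇_L y‖_{ℒ^{∞,p}(E)}. -/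
open Matrix
open scoped ENNReal

/-- `ℒᵖ` norm of a signal on the vertices of a graph with `n` vertices
(`max` of absolute values for `p = ∞`). -/
noncomputable def lpVert {n : ℕ} (p : ℝ≥0∞) (x : Fin n → ℝ) : ℝ :=
  if p = ∞ then ⨆ i, |x i| else (∑ i, |x i| ^ p.toReal) ^ (1 / p.toReal)

/-- `ℒᵖ` norm of a function on a (directed) edge set `E`. -/
noncomputable def lpEdge {n : ℕ} (p : ℝ≥0∞) (E : Finset (Fin n × Fin n))
    (z : Fin n × Fin n → ℝ) : ℝ :=
  if p = ∞ then ⨆ e : E, |z e| else (∑ e ∈ E, |z e| ^ p.toReal) ^ (1 / p.toReal)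

/-- Hybrid norm `‖z‖_{ℒ^{∞,p}(E)} = max_i (∑_{i' : (i,i') ∈ E} |z(i,i')|ᵖ)^{1/p}`. -/
noncomputable def lpHybrid {n : ℕ} (p : ℝ≥0∞) (E : Finset (Fin n × Fin n))
    (z : Fin n × Fin n → ℝ) : ℝ :=
  ⨆ i : Fin n, lpEdge p (E.filter fun e => e.1 = i) z

lemma lpVert_nonneg {n : ℕ} (p : ℝ≥0∞) (x : Fin n → ℝ) : 0 ≤ lpVert p x := by
  unfold lpVert
  split
  · exact Real.iSup_nonneg fun i => abs_nonneg _
  · exact Real.rpow_nonneg (Finset.sum_nonneg fun i _ => Real.rpow_nonneg (abs_nonneg _) _) _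

lemma lpEdge_nonneg {n : ℕ} (p : ℝ≥0∞) (E : Finset (Fin n × Fin n))
    (z : Fin n × Fin n → ℝ) : 0 ≤ lpEdge p E z := by
  unfold lpEdge
  split
  · exact Real.iSup_nonneg fun i => abs_nonneg _
  · exact Real.rpow_nonneg (Finset.sum_nonneg fun i _ => Real.rpow_nonneg (abs_nonneg _) _) _

lemma lpHybrid_nonneg {n : ℕ} (p : ℝ≥0∞) (E : Finset (Fin n × Fin n))
    (z : Fin n × Fin n → ℝ) : 0 ≤ lpHybrid p E z :=
  Real.iSup_nonneg fun i => lpEdge_nonneg _ _ _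

set_option maxHeartbeats 1000000 in
/-- Leibniz-type `ℒᵖ` estimate for the graph gradient: for `1 ≤ p ≤ ∞`,
`‖∇_L(x·y)‖_{ℒᵖ(E)} ≤ ‖∇_L x‖_{ℒᵖ(E)} ‖y‖_{ℒ^∞(G)} + ‖x‖_{ℒᵖ(G)} ‖∇_L y‖_{ℒ^{∞,p}(E)}`. -/
theorem gradient_leibniz_lp_estimate
    {n : ℕ} (A : Matrix (Fin n) (Fin n) ℝ)
    (hsymm : A.IsSymm) (hnonneg : ∀ i j, 0 ≤ A i j)
    (p : ℝ≥0∞) (hp : 1 ≤ p) (x y : Fin n → ℝ) :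
    let E : Finset (Fin n × Fin n) := Finset.univ.filter fun e => A e.1 e.2 ≠ 0
    let grad : (Fin n → ℝ) → Fin n × Fin n → ℝ :=
      fun z e => Real.sqrt (A e.1 e.2) * (z e.1 - z e.2)
    lpEdge p E (grad (x * y)) ≤
      lpEdge p E (grad x) * lpVert ∞ y + lpVert p x * lpHybrid p E (grad y) := by
  intro E grad
  set M : ℝ := lpVert ∞ y with hMdef
  have hMnn : 0 ≤ M := lpVert_nonneg _ _
  have hMle : ∀ i, |y i| ≤ M := by
    intro i
    rw [hMdef]
    unfold lpVert
    rw [if_pos rfl]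
    exact le_ciSup (f := fun j => |y j|) (Set.Finite.bddAbove (Set.finite_range _)) i
  -- pointwise bound
  have key : ∀ e : Fin n × Fin n,
      |grad (x * y) e| ≤ |grad x e| * M + |x e.1| * |grad y e| := by
    intro e
    have hid : grad (x * y) e = grad x e * y e.2 + x e.1 * grad y e := by
      simp only [grad, Pi.mul_apply]; ring
    calc |grad (x * y) e| ≤ |grad x e * y e.2| + |x e.1 * grad y e| := by
          rw [hid]; exact abs_add_le _ _
      _ ≤ |grad x e| * M + |x e.1| * |grad y e| := by
          refine add_le_add ?_ (le_of_eq (abs_mul _ _))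
          rw [abs_mul]
          exact mul_le_mul_of_nonneg_left (hMle _) (abs_nonneg _)
  by_cases hptop : p = ∞
  · subst hptop
    simp only [lpEdge, lpVert, lpHybrid, if_pos rfl]
    set Sx : ℝ := ⨆ e : E, |grad x e|
    set Mx : ℝ := ⨆ i, |x i|
    set H : ℝ := lpHybrid ∞ E (grad y) with hHdef
    have hSxnn : 0 ≤ Sx := Real.iSup_nonneg fun e => abs_nonneg _
    have hMxnn : 0 ≤ Mx := Real.iSup_nonneg fun i => abs_nonneg _
    have hHnn : 0 ≤ H := lpHybrid_nonneg _ _ _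
    have hH : ∀ e : E, |grad y e| ≤ H := by
      rintro ⟨e, he⟩
      have h1 : |grad y e| ≤ lpEdge ∞ (E.filter fun e' => e'.1 = e.1) (grad y) := by
        unfold lpEdge
        rw [if_pos rfl]
        have hmem : e ∈ E.filter fun e' => e'.1 = e.1 := Finset.mem_filter.2 ⟨he, rfl⟩
        exact le_ciSup (f := fun e' : (E.filter fun e' => e'.1 = e.1 : Finset _) => |grad y e'|)
          (Set.Finite.bddAbove (Set.finite_range _)) ⟨e, hmem⟩
      refine h1.trans ?_
      rw [hHdef]
      unfold lpHybrid
      exact le_ciSup (f := fun j => lpEdge ∞ (E.filter fun e' => e'.1 = j) (grad y))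
        (Set.Finite.bddAbove (Set.finite_range _)) e.1
    rcases isEmpty_or_nonempty E with hE | hE
    · rw [Real.iSup_of_isEmpty]
      positivity
    · refine ciSup_le fun e => ?_
      refine (key e).trans (add_le_add ?_ ?_)
      · have := le_ciSup (f := fun e : E => |grad x (e : Fin n × Fin n)|)
          (Set.Finite.bddAbove (Set.finite_range _)) e
        exact mul_le_mul this le_rfl hMnn hSxnn
      · have hx1 : |x (e : Fin n × Fin n).1| ≤ Mx :=
          le_ciSup (Set.Finite.bddAbove (Set.finite_range fun i => |x i|)) (e : Fin n × Fin n).1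
        exact mul_le_mul hx1 (hH e) (abs_nonneg _) hMxnn
  · -- finite p
    have hq1 : 1 ≤ p.toReal := by
      rw [show (1 : ℝ) = (1 : ℝ≥0∞).toReal by simp]
      exact ENNReal.toReal_mono hptop hp
    set q : ℝ := p.toReal with hqdef
    have hq0 : 0 < q := lt_of_lt_of_le one_pos hq1
    set H : ℝ := lpHybrid p E (grad y) with hHdef
    have hHnn : 0 ≤ H := lpHybrid_nonneg _ _ _
    set T : Fin n → ℝ := fun i => ∑ e ∈ E.filter fun e' => e'.1 = i, |grad y e| ^ q with hTdef
    have hTnn : ∀ i, 0 ≤ T i := fun i =>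
      Finset.sum_nonneg fun e _ => Real.rpow_nonneg (abs_nonneg _) _
    have hTH : ∀ i, T i ≤ H ^ q := by
      intro i
      have h1 : T i ^ (1 / q) ≤ H := by
        have heq : T i ^ (1 / q) = lpEdge p (E.filter fun e => e.1 = i) (grad y) := by
          unfold lpEdge
          rw [if_neg hptop]
        rw [heq, hHdef]
        unfold lpHybrid
        exact le_ciSup (f := fun j => lpEdge p (E.filter fun e => e.1 = j) (grad y))
          (Set.Finite.bddAbove (Set.finite_range _)) i
      calc T i = (T i ^ (1 / q)) ^ q := by
            rw [← Real.rpow_mul (hTnn i), one_div_mul_cancel (ne_of_gt hq0), Real.rpow_one]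
        _ ≤ H ^ q := Real.rpow_le_rpow (Real.rpow_nonneg (hTnn i) _) h1 hq0.le
    simp only [lpEdge, lpVert, if_neg hptop]
    -- step 1: pointwise + Minkowski
    set f : Fin n × Fin n → ℝ := fun e => |grad x e| * M with hfdef
    set g : Fin n × Fin n → ℝ := fun e => |x e.1| * |grad y e| with hgdef
    have hfnn : ∀ e, 0 ≤ f e := fun e => mul_nonneg (abs_nonneg _) hMnn
    have hgnn : ∀ e, 0 ≤ g e := fun e => mul_nonneg (abs_nonneg _) (abs_nonneg _)
    have step1 : (∑ e ∈ E, |grad (x * y) e| ^ q) ^ (1 / q) ≤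
        (∑ e ∈ E, |f e| ^ q) ^ (1 / q) + (∑ e ∈ E, |g e| ^ q) ^ (1 / q) := by
      refine le_trans ?_ (Real.Lp_add_le E f g hq1)
      refine Real.rpow_le_rpow (Finset.sum_nonneg fun e _ => Real.rpow_nonneg (abs_nonneg _) _)
        (Finset.sum_le_sum fun e _ => ?_) (by positivity)
      refine Real.rpow_le_rpow (abs_nonneg _) ?_ hq0.le
      rw [abs_of_nonneg (add_nonneg (hfnn e) (hgnn e))]
      exact key e
    refine step1.trans (add_le_add ?_ ?_)
    · -- first term
      have : ∀ e ∈ E, |f e| ^ q = |grad x e| ^ q * M ^ q := by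
        intro e _
        rw [abs_of_nonneg (hfnn e), Real.mul_rpow (abs_nonneg _) hMnn]
      rw [Finset.sum_congr rfl this, ← Finset.sum_mul,
        Real.mul_rpow (Finset.sum_nonneg fun e _ => Real.rpow_nonneg (abs_nonneg _) _)
          (Real.rpow_nonneg hMnn _),
        ← Real.rpow_mul hMnn, mul_one_div_cancel (ne_of_gt hq0), Real.rpow_one]
    · -- second term
      have hsum : ∑ e ∈ E, |g e| ^ q = ∑ i, |x i| ^ q * T i := by
        rw [← Finset.sum_fiberwise E (fun e => e.1) (fun e => |g e| ^ q)]
        refine Finset.sum_congr rfl fun i _ => ?_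
        rw [hTdef, Finset.mul_sum]
        refine Finset.sum_congr rfl fun e he => ?_
        obtain ⟨-, he1⟩ := Finset.mem_filter.1 he
        rw [abs_of_nonneg (hgnn e), Real.mul_rpow (abs_nonneg _) (abs_nonneg _), he1]
      have hsum2 : ∑ i, |x i| ^ q * T i ≤ (∑ i, |x i| ^ q) * H ^ q := by
        rw [Finset.sum_mul]
        exact Finset.sum_le_sum fun i _ =>
          mul_le_mul_of_nonneg_left (hTH i) (Real.rpow_nonneg (abs_nonneg _) _)
      calc (∑ e ∈ E, |g e| ^ q) ^ (1 / q) ≤ ((∑ i, |x i| ^ q) * H ^ q) ^ (1 / q) := by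
            rw [hsum]
            exact Real.rpow_le_rpow (Finset.sum_nonneg fun i _ =>
              mul_nonneg (Real.rpow_nonneg (abs_nonneg _) _) (hTnn i)) hsum2 (by positivity)
        _ = (∑ i, |x i| ^ q) ^ (1 / q) * H := by
            rw [Real.mul_rpow (Finset.sum_nonneg fun i _ => Real.rpow_nonneg (abs_nonneg _) _)
              (Real.rpow_nonneg hHnn _), ← Real.rpow_mul hHnn,
              mul_one_div_cancel (ne_of_gt hq0), Real.rpow_one]
end

section
/- If a signal φ on a graph is supported in V_j ⊆ V and its gradient vanishes on all boundary edges (edges with exactly one endpoint in V_j), then for any signal y, the gradient of the product φ·y is supported in the edge set E_j of the induced subgraph on V_j, and on E_j the global gradient ∇_L(φ·y) agrees with the local gradient ∇_{L⁽ʲ⁾}(φ·y) computed in the induced subgraph. -/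
open Matrix

/-- Localization of the gradient of a product: if `φ` is supported in `V_j` and its gradient
vanishes on every boundary edge (an edge with exactly one endpoint in `V_j`), then for any
signal `y` the gradient of the pointwise product `φ·y` is supported in the edge set `E_j` of
the induced subgraph on `V_j`, and on `E_j` the global gradient `∇_L(φ·y)` agrees with the
local gradient `∇_{L⁽ʲ⁾}` of the restriction of `φ·y` computed in the induced subgraph. -/
theorem product_gradient_localization
    {n : ℕ} (A : Matrix (Fin n) (Fin n) ℝ)
    (hsymm : A.IsSymm) (hnonneg : ∀ i j, 0 ≤ A i j)
    (Vj : Finset (Fin n)) (φ y : Fin n → ℝ)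
    (hsupp : ∀ v, v ∉ Vj → φ v = 0)
    (hbc : ∀ v w : Fin n, A v w ≠ 0 → v ∈ Vj → w ∉ Vj →
      Real.sqrt (A v w) * (φ v - φ w) = 0) :
    let grad : (Fin n → ℝ) → Fin n × Fin n → ℝ :=
      fun z e => Real.sqrt (A e.1 e.2) * (z e.1 - z e.2)
    -- the gradient of `φ·y` is supported on edges with both endpoints in `V_j`
    (∀ v w : Fin n, A v w ≠ 0 → grad (φ * y) (v, w) ≠ 0 → v ∈ Vj ∧ w ∈ Vj) ∧
    -- on such edges it coincides with the local gradient of the restriction to `V_j`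
    (∀ v w : {u : Fin n // u ∈ Vj}, A v w ≠ 0 →
      grad (φ * y) (v, w) =
        Real.sqrt (A v w) *
          ((fun u : {u : Fin n // u ∈ Vj} => φ u * y u) v -
            (fun u : {u : Fin n // u ∈ Vj} => φ u * y u) w)) := by
  intro grad
  constructor
  · intro v w hA hgrad
    by_contra h
    apply hgrad
    push_neg at h
    by_cases hv : v ∈ Vj
    · have hw : w ∉ Vj := h hv
      have hbc' := hbc v w hA hv hw
      have hφw : φ w = 0 := hsupp w hw
      have : Real.sqrt (A v w) * φ v = 0 := by
        have := hbc'
        rw [hφw] at this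
        simpa using this
      show Real.sqrt (A v w) * ((φ * y) v - (φ * y) w) = 0
      simp only [Pi.mul_apply]
      linear_combination y v * this - Real.sqrt (A v w) * y w * hφw
    · by_cases hw : w ∈ Vj
      · have hA' : A w v ≠ 0 := by
          rw [← hsymm.apply v w] at hA; exact hA
        have hbc' := hbc w v hA' hw hv
        have hφv : φ v = 0 := hsupp v hv
        have hs : Real.sqrt (A w v) * φ w = 0 := by
          rw [hφv] at hbc'; simpa using hbc'
        have heq : Real.sqrt (A v w) = Real.sqrt (A w v) := by
          rw [← hsymm.apply v w]
        show Real.sqrt (A v w) * ((φ * y) v - (φ * y) w) = 0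
        simp only [Pi.mul_apply]
        rw [heq]
        linear_combination (-(y w)) * hs + Real.sqrt (A w v) * y v * hφv
      · have hφv : φ v = 0 := hsupp v hv
        have hφw : φ w = 0 := hsupp w hw
        show Real.sqrt (A v w) * ((φ * y) v - (φ * y) w) = 0
        simp [Pi.mul_apply, hφv, hφw]
  · intro v w _
    rfl
end
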